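/- The pair f(x) = 1, g(x) = ln x satisfies Eqs. (VIII)–(IX) at every x > 0, but does not satisfy Eq. (I) at any x > 0 (indeed for this pair the left side of (I) is 2/x³ while the right side is 3/(2x³)). -/

import Mathlib

/-- Eq. (I): `g''' = (3/10)·g'·(f')²/f² − (2/5)·g'·f''/f + (3/2)·(g'')²/g'`. -/
def SatEqI (f g : ℝ → ℝ) (x : ℝ) : Prop :=
  (deriv^[3] g x) =
    (3/10) * deriv g x * (deriv f x)^2 / (f x)^2
      - (2/5) * deriv g x * (deriv^[2] f x) / f x
      + (3/2) * (deriv^[2] g x)^2 / deriv g x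

/-- Eq. (VIII). -/
def SatEqVIII (f g : ℝ → ℝ) (x : ℝ) : Prop :=
  (deriv^[4] g x) =
    -3 * (deriv f x)^3 * deriv g x / (5 * (f x)^3)
      + deriv f x * deriv g x * (deriv^[2] f x) / (f x)^2
      - 3 * (deriv f x)^2 * (deriv^[2] g x) / (5 * (f x)^2)
      + 4 * (deriv^[2] f x) * (deriv^[2] g x) / (5 * f x)
      - 6 * (deriv^[2] g x)^3 / (deriv g x)^2
      - (2/5) * deriv g x * (deriv^[3] f x) / f x
      + 6 * (deriv^[2] g x) * (deriv^[3] g x) / deriv g x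

/-- Eq. (IX). -/
def SatEqIX (f g : ℝ → ℝ) (x : ℝ) : Prop :=
  (deriv^[5] f x) =
    -18 * (deriv f x)^5 / (5 * (f x)^4)
      + 54 * (deriv f x)^3 * (deriv^[2] f x) / (5 * (f x)^3)
      - 7 * deriv f x * (deriv^[2] f x)^2 / (f x)^2
      - 18 * (deriv f x)^4 * (deriv^[2] g x) / (5 * (f x)^3 * deriv g x)
      + 48 * (deriv f x)^2 * (deriv^[2] f x) * (deriv^[2] g x) / (5 * (f x)^2 * deriv g x)
      - 22 * (deriv^[2] f x)^2 * (deriv^[2] g x) / (5 * f x * deriv g x)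
      - 22 * (deriv f x)^2 * (deriv^[3] f x) / (5 * (f x)^2)
      + 16 * (deriv^[2] f x) * (deriv^[3] f x) / (5 * f x)
      - 4 * deriv f x * (deriv^[2] g x) * (deriv^[3] f x) / (f x * deriv g x)
      + 2 * deriv f x * (deriv^[4] f x) / f x
      + 4 * (deriv^[2] g x) * (deriv^[4] f x) / deriv g x

/-!
For constant `f` every term of (VIII)–(IX) containing a derivative of `f` vanishes: (IX) becomes
`0 = 0`, and (VIII) becomes `g'''' g'² = 6 g'' g''' g' − 6 g''³`, which `ln` satisfies. Eq. (I)
instead becomes the vanishing of the Schwarzian derivative `g'''/g' − (3/2)(g''/g')²`, and the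
Schwarzian derivative of `ln` is `1/(2x²)`.
-/

theorem iter_deriv_const_succ {𝕜 F : Type*} [NontriviallyNormedField 𝕜] [NormedAddCommGroup F]
    [NormedSpace 𝕜 F] (n : ℕ) (c : F) (x : 𝕜) : deriv^[n + 1] (fun _ => c) x = 0 := by
  rw [← iteratedDeriv_eq_iterate, iteratedDeriv_const, if_neg n.succ_ne_zero]

theorem Real.iter_deriv_succ_log (n : ℕ) (x : ℝ) :
    deriv^[n + 1] Real.log x = (-1) ^ n * n.factorial * x ^ (-1 - n : ℤ) := by
  rw [Function.iterate_succ_apply, Real.deriv_log', iter_deriv_inv]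

section ConstantF

variable (c : ℝ) (g : ℝ → ℝ) (x : ℝ)

theorem satEqIX_const : SatEqIX (fun _ => c) g x := by
  simp [SatEqIX, iter_deriv_const_succ]

theorem satEqVIII_const_iff :
    SatEqVIII (fun _ => c) g x ↔ deriv^[4] g x =
      -6 * (deriv^[2] g x) ^ 3 / (deriv g x) ^ 2
        + 6 * deriv^[2] g x * deriv^[3] g x / deriv g x := by
  simp only [SatEqVIII, deriv_const, iter_deriv_const_succ]
  ring_nf

theorem satEqI_const_iff :
    SatEqI (fun _ => c) g x ↔ deriv^[3] g x = 3 / 2 * (deriv^[2] g x) ^ 2 / deriv g x := by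
  simp only [SatEqI, deriv_const, iter_deriv_const_succ]
  ring_nf

end ConstantF

/-- the pair `f(x) = 1`, `g(x) = ln x` satisfies Eqs. (VIII)–(IX) at every
`x > 0`, but not Eq. (I): the left side of (I) is `2/x³` while the right side is `3/(2x³)`. -/
theorem statement6 :
    ∀ x : ℝ, 0 < x →
      SatEqVIII (fun _ => 1) Real.log x ∧
      SatEqIX (fun _ => 1) Real.log x ∧
      ¬ SatEqI (fun _ => 1) Real.log x ∧
      (deriv^[3] Real.log x) = 2 / x^3 ∧
      (3/10) * deriv Real.log x * (deriv (fun _ : ℝ => (1:ℝ)) x)^2 / ((1:ℝ))^2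
        - (2/5) * deriv Real.log x * (deriv^[2] (fun _ : ℝ => (1:ℝ)) x) / (1:ℝ)
        + (3/2) * (deriv^[2] Real.log x)^2 / deriv Real.log x
        = 3 / (2 * x^3) := by
  intro x hx
  have h1 : deriv Real.log x = x⁻¹ := Real.deriv_log x
  have h2 : deriv^[2] Real.log x = -(x ^ 2)⁻¹ := by simp [Real.iter_deriv_succ_log]
  have h3 : deriv^[3] Real.log x = 2 / x ^ 3 := by
    norm_num [Real.iter_deriv_succ_log, Nat.factorial, div_eq_mul_inv]
  have h4 : deriv^[4] Real.log x = -6 / x ^ 4 := by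
    norm_num [Real.iter_deriv_succ_log, Nat.factorial, div_eq_mul_inv]
  refine ⟨?_, satEqIX_const 1 Real.log x, ?_, h3, ?_⟩
  · rw [satEqVIII_const_iff, h1, h2, h3, h4]
    field_simp
    ring
  · rw [satEqI_const_iff, h1, h2, h3]
    field_simp
    norm_num
  · simp only [deriv_const, iter_deriv_const_succ, h1, h2]
    field_simp
    ring
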